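/- Let G be a connected simple graph of order n with diam(G) = 2 and β(G) = n − 3, with twin graph G*, and let v be a vertex of G such that Γ_2^*(v^*) ≠ ∅ and Γ_1(v) is homogeneous. If Γ_2(v) is homogeneous and |R_1^*(v^*)| = 2, then R_2^*(v^*) = ∅. -/

import Mathlib

namespace PaperMetricDim

open SimpleGraph

variable {V : Type*}

/-- A set `W` of vertices resolves the graph `G`: any two distinct vertices have
different distance to some vertex of `W`. -/
def Resolves (G : SimpleGraph V) (W : Set V) : Prop :=
  ∀ u v : V, u ≠ v → ∃ w ∈ W, G.dist u w ≠ G.dist v w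

/-- The metric dimension of `G`: the minimum cardinality of a resolving set. -/
noncomputable def metricDim (G : SimpleGraph V) : ℕ :=
  sInf {k : ℕ | ∃ W : Set V, Resolves G W ∧ W.ncard = k}

/-- `G` is connected and has diameter exactly `d`. -/
def diamEq (G : SimpleGraph V) (d : ℕ) : Prop :=
  G.Connected ∧ (∀ u v : V, G.dist u v ≤ d) ∧ ∃ u v : V, G.dist u v = d

/-- A set of vertices is homogeneous if it induces a complete or an empty subgraph. -/
def Homogeneous (G : SimpleGraph V) (S : Set V) : Prop :=
  (∀ a ∈ S, ∀ b ∈ S, a ≠ b → G.Adj a b) ∨ (∀ a ∈ S, ∀ b ∈ S, ¬ G.Adj a b)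

/-- Two distinct vertices are twins: they have the same neighbours apart from
each other. -/
def Twins (G : SimpleGraph V) (u v : V) : Prop :=
  u ≠ v ∧ G.neighborSet u \ {v} = G.neighborSet v \ {u}

/-- The twin equivalence relation: equal or twins. -/
def twinRel (G : SimpleGraph V) (u v : V) : Prop := u = v ∨ Twins G u v

/-- The twin class of a vertex. -/
def twinClass (G : SimpleGraph V) (v : V) : Set V := {u : V | twinRel G v u}

/-- The vertices of the twin graph: twin equivalence classes. -/
def TwinVertex (G : SimpleGraph V) : Type _ := {S : Set V // ∃ v : V, S = twinClass G v}

/-- The twin graph `G*` of `G`: twin classes, two distinct classes being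
adjacent iff (some, equivalently all) representatives are adjacent in `G`. -/
def twinGraph (G : SimpleGraph V) : SimpleGraph (TwinVertex G) where
  Adj A B := A ≠ B ∧ ∃ a ∈ A.1, ∃ b ∈ B.1, G.Adj a b
  symm := ⟨by
    rintro A B ⟨hne, a, ha, b, hb, hab⟩
    exact ⟨hne.symm, b, hb, a, ha, hab.symm⟩⟩
  loopless := ⟨by rintro A ⟨hne, -⟩; exact hne rfl⟩

/-- The twin class of `v`, as a vertex of the twin graph. -/
def cls (G : SimpleGraph V) (v : V) : TwinVertex G := ⟨twinClass G v, v, rfl⟩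

/-- A twin-graph vertex of type (1): a singleton class. -/
def typeOne (G : SimpleGraph V) (A : TwinVertex G) : Prop := ∃ v : V, A.1 = {v}

/-- A twin-graph vertex of type (K): a class with at least two vertices inducing
a complete subgraph. -/
def typeK (G : SimpleGraph V) (A : TwinVertex G) : Prop :=
  A.1.Nontrivial ∧ ∀ a ∈ A.1, ∀ b ∈ A.1, a ≠ b → G.Adj a b

/-- A twin-graph vertex of type (N): a class with at least two vertices inducing
an empty subgraph. -/
def typeN (G : SimpleGraph V) (A : TwinVertex G) : Prop :=
  A.1.Nontrivial ∧ ∀ a ∈ A.1, ∀ b ∈ A.1, ¬ G.Adj a b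

/-- Type (1K): type (1) or type (K). -/
def type1K (G : SimpleGraph V) (A : TwinVertex G) : Prop := typeOne G A ∨ typeK G A

/-- Type (1N): type (1) or type (N). -/
def type1N (G : SimpleGraph V) (A : TwinVertex G) : Prop := typeOne G A ∨ typeN G A

/-- Type (KN): type (K) or type (N). -/
def typeKN (G : SimpleGraph V) (A : TwinVertex G) : Prop := typeK G A ∨ typeN G A

/-- `Γ_i(v)`: the set of vertices at distance `i` from `v`. -/
def Gamma (G : SimpleGraph V) (i : ℕ) (v : V) : Set V := {u : V | G.dist u v = i}

/-- `Γ_i^*(v^*)`: the set of twin-graph vertices at distance `i` from `v^*`. -/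
def GammaStar (G : SimpleGraph V) (i : ℕ) (v : V) : Set (TwinVertex G) :=
  {A : TwinVertex G | (twinGraph G).dist A (cls G v) = i}

/-- `R_1(v)`: neighbours of `v` having a neighbour at distance 2 from `v`. -/
def R1 (G : SimpleGraph V) (v : V) : Set V :=
  {x ∈ Gamma G 1 v | ∃ y ∈ Gamma G 2 v, G.Adj x y}

/-- `R_2(v) = Γ_1(v) \ R_1(v)`. -/
def R2 (G : SimpleGraph V) (v : V) : Set V := Gamma G 1 v \ R1 G v

/-- `R_1^*(v^*)`: twin-graph neighbours of `v^*` having a neighbour in `Γ_2^*(v^*)`. -/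
def R1Star (G : SimpleGraph V) (v : V) : Set (TwinVertex G) :=
  {A ∈ GammaStar G 1 v | ∃ B ∈ GammaStar G 2 v, (twinGraph G).Adj A B}

/-- `R_2^*(v^*) = Γ_1^*(v^*) \ R_1^*(v^*)`. -/
def R2Star (G : SimpleGraph V) (v : V) : Set (TwinVertex G) :=
  GammaStar G 1 v \ R1Star G v

/-- `M_1(x) = Γ_1(v) ∩ Γ_1(x)` (for `x ∈ Γ_1(v)`). -/
def M1 (G : SimpleGraph V) (v x : V) : Set V := Gamma G 1 v ∩ Gamma G 1 x

/-- `M_2(x) = Γ_1(v) ∩ Γ_2(x)` (for `x ∈ Γ_1(v)`). -/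
def M2 (G : SimpleGraph V) (v x : V) : Set V := Gamma G 1 v ∩ Gamma G 2 x

/-- Structure `G_1`: the twin graph is `K_3` and has at most one vertex of type (1K). -/
def structG1 (G : SimpleGraph V) : Prop :=
  ∃ a b c : TwinVertex G, a ≠ b ∧ a ≠ c ∧ b ≠ c ∧
    (∀ X : TwinVertex G, X = a ∨ X = b ∨ X = c) ∧
    (twinGraph G).Adj a b ∧ (twinGraph G).Adj a c ∧ (twinGraph G).Adj b c ∧
    (∀ X Y : TwinVertex G, type1K G X → type1K G Y → X = Y)

/-- Structure `G_2`: the twin graph is the path `P_3` with (a) centre of type (N)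
and some leaf of type (K), or (b) one leaf of type (K) and the other of type (KN). -/
def structG2 (G : SimpleGraph V) : Prop :=
  ∃ a b c : TwinVertex G, a ≠ b ∧ a ≠ c ∧ b ≠ c ∧
    (∀ X : TwinVertex G, X = a ∨ X = b ∨ X = c) ∧
    (twinGraph G).Adj a b ∧ (twinGraph G).Adj b c ∧ ¬ (twinGraph G).Adj a c ∧
    ((typeN G b ∧ (typeK G a ∨ typeK G c)) ∨
     (typeK G a ∧ typeKN G c) ∨ (typeK G c ∧ typeKN G a))

/-- Structure `G_3`: the twin graph is the paw, the triangle being `u, p, q` with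
the pendant vertex `l` attached to `u`; `p` is of type (N), `q` of type (1K),
`l` of type (1N); and if `q` is of type (K) then neither `l` nor `u` is of type (N). -/
def structG3 (G : SimpleGraph V) : Prop :=
  ∃ u p q l : TwinVertex G,
    u ≠ p ∧ u ≠ q ∧ u ≠ l ∧ p ≠ q ∧ p ≠ l ∧ q ≠ l ∧
    (∀ X : TwinVertex G, X = u ∨ X = p ∨ X = q ∨ X = l) ∧
    (twinGraph G).Adj u p ∧ (twinGraph G).Adj u q ∧ (twinGraph G).Adj p q ∧
    (twinGraph G).Adj u l ∧ ¬ (twinGraph G).Adj p l ∧ ¬ (twinGraph G).Adj q l ∧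
    typeN G p ∧ type1K G q ∧ type1N G l ∧
    (typeK G q → ¬ typeN G l ∧ ¬ typeN G u)

/-- Structure `G_4`: the twin graph is the cycle `C_5` and every vertex is of type (1). -/
def structG4 (G : SimpleGraph V) : Prop :=
  ∃ v0 v1 v2 v3 v4 : TwinVertex G,
    v0 ≠ v1 ∧ v0 ≠ v2 ∧ v0 ≠ v3 ∧ v0 ≠ v4 ∧ v1 ≠ v2 ∧ v1 ≠ v3 ∧ v1 ≠ v4 ∧
    v2 ≠ v3 ∧ v2 ≠ v4 ∧ v3 ≠ v4 ∧
    (∀ X : TwinVertex G, X = v0 ∨ X = v1 ∨ X = v2 ∨ X = v3 ∨ X = v4) ∧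
    (twinGraph G).Adj v0 v1 ∧ (twinGraph G).Adj v1 v2 ∧ (twinGraph G).Adj v2 v3 ∧
    (twinGraph G).Adj v3 v4 ∧ (twinGraph G).Adj v4 v0 ∧
    ¬ (twinGraph G).Adj v0 v2 ∧ ¬ (twinGraph G).Adj v1 v3 ∧ ¬ (twinGraph G).Adj v2 v4 ∧
    ¬ (twinGraph G).Adj v3 v0 ∧ ¬ (twinGraph G).Adj v4 v1 ∧
    (∀ X : TwinVertex G, typeOne G X)

/-- Structure `G_5`: the twin graph is `C_5` with one chord (cycle `v0 v1 v2 v3 v4`,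
chord `v0 v2`); the two adjacent degree-2 vertices `v3, v4` are of type (1), the
other vertices of type (1K). -/
def structG5 (G : SimpleGraph V) : Prop :=
  ∃ v0 v1 v2 v3 v4 : TwinVertex G,
    v0 ≠ v1 ∧ v0 ≠ v2 ∧ v0 ≠ v3 ∧ v0 ≠ v4 ∧ v1 ≠ v2 ∧ v1 ≠ v3 ∧ v1 ≠ v4 ∧
    v2 ≠ v3 ∧ v2 ≠ v4 ∧ v3 ≠ v4 ∧
    (∀ X : TwinVertex G, X = v0 ∨ X = v1 ∨ X = v2 ∨ X = v3 ∨ X = v4) ∧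
    (twinGraph G).Adj v0 v1 ∧ (twinGraph G).Adj v1 v2 ∧ (twinGraph G).Adj v2 v3 ∧
    (twinGraph G).Adj v3 v4 ∧ (twinGraph G).Adj v4 v0 ∧ (twinGraph G).Adj v0 v2 ∧
    ¬ (twinGraph G).Adj v1 v3 ∧ ¬ (twinGraph G).Adj v1 v4 ∧ ¬ (twinGraph G).Adj v2 v4 ∧
    typeOne G v3 ∧ typeOne G v4 ∧ type1K G v0 ∧ type1K G v1 ∧ type1K G v2

/-- Structure `G_6`: the twin graph is `C_5` with two adjacent chords (cycle
`v0 v1 v2 v3 v4`, chords `v0 v2` and `v0 v3`, so `v0` has degree 4); `v0` is of any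
type, the other vertices of type (1K); no two non-adjacent vertices are both of
type (K), and no two adjacent vertices have the different types (K) and (N). -/
def structG6 (G : SimpleGraph V) : Prop :=
  ∃ v0 v1 v2 v3 v4 : TwinVertex G,
    v0 ≠ v1 ∧ v0 ≠ v2 ∧ v0 ≠ v3 ∧ v0 ≠ v4 ∧ v1 ≠ v2 ∧ v1 ≠ v3 ∧ v1 ≠ v4 ∧
    v2 ≠ v3 ∧ v2 ≠ v4 ∧ v3 ≠ v4 ∧
    (∀ X : TwinVertex G, X = v0 ∨ X = v1 ∨ X = v2 ∨ X = v3 ∨ X = v4) ∧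
    (twinGraph G).Adj v0 v1 ∧ (twinGraph G).Adj v1 v2 ∧ (twinGraph G).Adj v2 v3 ∧
    (twinGraph G).Adj v3 v4 ∧ (twinGraph G).Adj v4 v0 ∧ (twinGraph G).Adj v0 v2 ∧
    (twinGraph G).Adj v0 v3 ∧
    ¬ (twinGraph G).Adj v1 v3 ∧ ¬ (twinGraph G).Adj v1 v4 ∧ ¬ (twinGraph G).Adj v2 v4 ∧
    type1K G v1 ∧ type1K G v2 ∧ type1K G v3 ∧ type1K G v4 ∧
    (∀ X Y : TwinVertex G, X ≠ Y → ¬ (twinGraph G).Adj X Y →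
      ¬ (typeK G X ∧ typeK G Y)) ∧
    (∀ X Y : TwinVertex G, (twinGraph G).Adj X Y → ¬ (typeK G X ∧ typeN G Y))

/-- Structure `G_7`: the twin graph is the kite (`K_4` minus an edge, vertices
`a, b` of degree 3 in the kite and `c, d` the non-adjacent pair) with a pendant
vertex `l` attached to the degree-3 vertex `a`; `l` is of type (1), `a` and `b`
are of type (1K), one of `c, d` is of type (K) and the other of type (1). -/
def structG7 (G : SimpleGraph V) : Prop :=
  ∃ a b c d l : TwinVertex G,
    a ≠ b ∧ a ≠ c ∧ a ≠ d ∧ a ≠ l ∧ b ≠ c ∧ b ≠ d ∧ b ≠ l ∧ c ≠ d ∧ c ≠ l ∧ d ≠ l ∧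
    (∀ X : TwinVertex G, X = a ∨ X = b ∨ X = c ∨ X = d ∨ X = l) ∧
    (twinGraph G).Adj a b ∧ (twinGraph G).Adj a c ∧ (twinGraph G).Adj a d ∧
    (twinGraph G).Adj b c ∧ (twinGraph G).Adj b d ∧ (twinGraph G).Adj a l ∧
    ¬ (twinGraph G).Adj c d ∧ ¬ (twinGraph G).Adj b l ∧ ¬ (twinGraph G).Adj c l ∧
    ¬ (twinGraph G).Adj d l ∧
    typeOne G l ∧ type1K G a ∧ type1K G b ∧ typeK G c ∧ typeOne G d

/-- Structure `G_8`: the twin graph is the kite (`K_4` minus an edge, `a, b` of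
degree 3 and `c, d` the non-adjacent degree-2 pair); one degree-2 vertex `c` is of
type (K) and the other `d` of type (1); one degree-3 vertex `a` is of type (N)
and the other `b` of type (1K). -/
def structG8 (G : SimpleGraph V) : Prop :=
  ∃ a b c d : TwinVertex G,
    a ≠ b ∧ a ≠ c ∧ a ≠ d ∧ b ≠ c ∧ b ≠ d ∧ c ≠ d ∧
    (∀ X : TwinVertex G, X = a ∨ X = b ∨ X = c ∨ X = d) ∧
    (twinGraph G).Adj a b ∧ (twinGraph G).Adj a c ∧ (twinGraph G).Adj a d ∧
    (twinGraph G).Adj b c ∧ (twinGraph G).Adj b d ∧ ¬ (twinGraph G).Adj c d ∧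
    typeN G a ∧ type1K G b ∧ typeK G c ∧ typeOne G d

/-- Structure `G_9`: the twin graph is `C_4`, two adjacent vertices of type (K)
and the other two of type (1). -/
def structG9 (G : SimpleGraph V) : Prop :=
  ∃ v0 v1 v2 v3 : TwinVertex G,
    v0 ≠ v1 ∧ v0 ≠ v2 ∧ v0 ≠ v3 ∧ v1 ≠ v2 ∧ v1 ≠ v3 ∧ v2 ≠ v3 ∧
    (∀ X : TwinVertex G, X = v0 ∨ X = v1 ∨ X = v2 ∨ X = v3) ∧
    (twinGraph G).Adj v0 v1 ∧ (twinGraph G).Adj v1 v2 ∧ (twinGraph G).Adj v2 v3 ∧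
    (twinGraph G).Adj v3 v0 ∧ ¬ (twinGraph G).Adj v0 v2 ∧ ¬ (twinGraph G).Adj v1 v3 ∧
    typeK G v0 ∧ typeK G v1 ∧ typeOne G v2 ∧ typeOne G v3

/-- Structure `G_10`: the twin graph is the wheel `C_4 ∨ K_1` (hub `h`, rim
`v0 v1 v2 v3`); two adjacent rim (degree-3) vertices `v0, v1` are of type (K), the
hub is of type (1K), and the other vertices of type (1). -/
def structG10 (G : SimpleGraph V) : Prop :=
  ∃ h v0 v1 v2 v3 : TwinVertex G,
    h ≠ v0 ∧ h ≠ v1 ∧ h ≠ v2 ∧ h ≠ v3 ∧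
    v0 ≠ v1 ∧ v0 ≠ v2 ∧ v0 ≠ v3 ∧ v1 ≠ v2 ∧ v1 ≠ v3 ∧ v2 ≠ v3 ∧
    (∀ X : TwinVertex G, X = h ∨ X = v0 ∨ X = v1 ∨ X = v2 ∨ X = v3) ∧
    (twinGraph G).Adj h v0 ∧ (twinGraph G).Adj h v1 ∧ (twinGraph G).Adj h v2 ∧
    (twinGraph G).Adj h v3 ∧
    (twinGraph G).Adj v0 v1 ∧ (twinGraph G).Adj v1 v2 ∧ (twinGraph G).Adj v2 v3 ∧
    (twinGraph G).Adj v3 v0 ∧ ¬ (twinGraph G).Adj v0 v2 ∧ ¬ (twinGraph G).Adj v1 v3 ∧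
    typeK G v0 ∧ typeK G v1 ∧ type1K G h ∧ typeOne G v2 ∧ typeOne G v3

/-!
Take `x^* ∈ R_2^*(v^*)`. A neighbour of `x` outside `v^*` that is not adjacent to `v` would
have its class in `Γ_2^*(v^*)`, adjacent to `x^*`; so such neighbours do not exist.

If `v` has a non-adjacent twin `t`, write `R_1^*(v^*) = {a^*, b^*}`. Then `t` separates `v` from
`x, a, b`, the neighbours of `a` and `b` in `Γ_2(v)` separate them from `x`, and a vertex
witnessing that `a, b` are not twins separates `a` from `b` (it is not `x`, as `Γ_1(v)` is
homogeneous). So `V ∖ {v, x, a, b}` resolves `G` and `β(G) ≤ n - 4`.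

Otherwise all twins of `v` are adjacent to `v`, so every neighbour of `x` other than `v` lies in
`Γ_1(v)`. If `Γ_1(v)` is a clique, `x` is a twin of `v`; if it is independent, `v` is the only
neighbour of `x`, and no vertex of `Γ_2(v)` is within distance two of `x`.
-/

theorem _root_.SimpleGraph.dist_eq_two_iff {G : SimpleGraph V} {u v : V} :
    G.dist u v = 2 ↔ u ≠ v ∧ ¬ G.Adj u v ∧ (G.commonNeighbors u v).Nonempty := by
  rw [← edist_eq_two_iff]
  constructor
  · intro h
    rw [← (Reachable.of_dist_ne_zero (by omega : G.dist u v ≠ 0)).coe_dist_eq_edist, h]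
    rfl
  · intro h
    obtain ⟨w, huw, hvw⟩ := (edist_eq_two_iff.1 h).2.2
    rw [← (huw.reachable.trans hvw.reachable.symm).coe_dist_eq_edist] at h
    exact_mod_cast h

section

variable {G : SimpleGraph V}

theorem exists_adj_adj_of_not_adj (hc : G.Connected) (hle : ∀ u w, G.dist u w ≤ 2) {u w : V}
    (hne : u ≠ w) (h : ¬ G.Adj u w) : ∃ m, G.Adj u m ∧ G.Adj m w := by
  have h2 : G.dist u w = 2 := le_antisymm (hle u w) (hc.one_lt_dist_of_ne_of_not_adj hne h)
  obtain ⟨m, hum, hwm⟩ := (G.dist_eq_two_iff.1 h2).2.2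
  exact ⟨m, hum, hwm.symm⟩

theorem dist_ne_dist_of_not_adj_iff {u w z : V} (h : ¬ (G.Adj u z ↔ G.Adj w z)) :
    G.dist u z ≠ G.dist w z := fun hd => h (by rw [← dist_eq_one_iff_adj, hd, dist_eq_one_iff_adj])

theorem metricDim_add_length_le [Fintype V] (hc : G.Connected) {l : List V}
    (hl : l.Pairwise fun u w => ∃ z ∉ l, G.dist u z ≠ G.dist w z) :
    metricDim G + l.length ≤ Fintype.card V := by
  classical
  have : Std.Symm fun u w => ∃ z ∉ l, G.dist u z ≠ G.dist w z :=
    ⟨fun _ _ ⟨z, hz, h⟩ => ⟨z, hz, h.symm⟩⟩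
  have hnodup : l.Nodup := hl.imp fun ⟨z, _, h⟩ huw => h (huw ▸ rfl)
  have hres : Resolves G (↑l.toFinset)ᶜ := by
    intro u w huw
    by_cases hu : u ∈ l
    · by_cases hw : w ∈ l
      · simpa using hl.forall hu hw huw
      · refine ⟨w, by simpa using hw, ?_⟩
        rw [dist_self]
        exact hc.dist_eq_zero_iff.not.2 huw
    · refine ⟨u, by simpa using hu, ?_⟩
      rw [dist_self]
      exact Ne.symm (hc.dist_eq_zero_iff.not.2 huw.symm)
  have hdim : metricDim G ≤ (↑l.toFinset : Set V)ᶜ.ncard := Nat.sInf_le ⟨_, hres, rfl⟩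
  have hcard := Set.ncard_compl_add_ncard (↑l.toFinset : Set V)
  rw [Set.ncard_coe_finset, List.toFinset_card_of_nodup hnodup, Nat.card_eq_fintype_card] at hcard
  omega

theorem mem_Gamma_one_iff {u v : V} : u ∈ Gamma G 1 v ↔ G.Adj u v := dist_eq_one_iff_adj

theorem Homogeneous.adj_iff_adj {S : Set V} (h : Homogeneous G S) {x a b : V} (hx : x ∈ S)
    (ha : a ∈ S) (hb : b ∈ S) (hxa : x ≠ a) (hxb : x ≠ b) : G.Adj a x ↔ G.Adj b x := by
  rcases h with hcl | hind
  · exact iff_of_true (hcl a ha x hx hxa.symm) (hcl b hb x hx hxb.symm)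
  · exact iff_of_false (hind a ha x hx) (hind b hb x hx)

theorem twinRel_iff {u w : V} :
    twinRel G u w ↔ ∀ s, s ≠ u → s ≠ w → (G.Adj u s ↔ G.Adj w s) := by
  unfold twinRel Twins
  constructor
  · rintro (rfl | ⟨-, h⟩) s hsu hsw
    · rfl
    · simpa [hsu, hsw] using congrArg (s ∈ ·) h
  · intro h
    by_cases huw : u = w
    · exact Or.inl huw
    · refine Or.inr ⟨huw, Set.ext fun s => ?_⟩
      simp only [Set.mem_sdiff, mem_neighborSet, Set.mem_singleton_iff]
      grind [G.ne_of_adj]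

theorem twinRel_equivalence : Equivalence (twinRel G) where
  refl _ := Or.inl rfl
  symm {u w} h := by
    rw [twinRel_iff] at h ⊢
    exact fun s hw hu => (h s hu hw).symm
  trans {u v w} huv hvw := by
    rw [twinRel_iff] at *
    intro s hsu hsw
    by_cases hsv : s = v
    · subst hsv
      by_cases huw : u = w
      · rw [huw]
      · grind [G.adj_comm]
    · exact (huv s hsu hsv).trans (hvw s hsv hsw)

theorem exists_not_adj_iff_of_not_twinRel {a b : V} (h : ¬ twinRel G a b) :
    ∃ s, s ≠ a ∧ s ≠ b ∧ ¬ (G.Adj a s ↔ G.Adj b s) := by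
  simpa [twinRel_iff] using h

theorem cls_eq_cls_iff {a b : V} : cls G a = cls G b ↔ twinRel G a b := by
  constructor
  · intro h
    have hb : b ∈ (cls G b).1 := Or.inl rfl
    rwa [← h] at hb
  · intro h
    apply Subtype.ext
    ext z
    exact ⟨twinRel_equivalence.trans (twinRel_equivalence.symm h), twinRel_equivalence.trans h⟩

theorem TwinVertex.exists_eq_cls (A : TwinVertex G) : ∃ a, A = cls G a :=
  let ⟨a, ha⟩ := A.2
  ⟨a, Subtype.ext ha⟩

theorem adj_iff_adj_of_cls_eq {a a' s : V} (h : cls G a = cls G a') (hs : cls G s ≠ cls G a) :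
    G.Adj a s ↔ G.Adj a' s :=
  twinRel_iff.1 (cls_eq_cls_iff.1 h) s (by rintro rfl; exact hs rfl)
    (by rintro rfl; exact hs h.symm)

theorem twinGraph_adj_cls_iff {a b : V} :
    (twinGraph G).Adj (cls G a) (cls G b) ↔ cls G a ≠ cls G b ∧ G.Adj a b := by
  refine ⟨fun ⟨hne, a', ha', b', hb', h⟩ => ⟨hne, ?_⟩,
    fun ⟨hne, h⟩ => ⟨hne, a, Or.inl rfl, b, Or.inl rfl, h⟩⟩
  have ha : cls G a = cls G a' := cls_eq_cls_iff.2 ha'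
  have hb : cls G b = cls G b' := cls_eq_cls_iff.2 hb'
  rw [adj_iff_adj_of_cls_eq ha hne.symm, G.adj_comm,
    adj_iff_adj_of_cls_eq hb (ha ▸ hne), G.adj_comm]
  exact h

theorem cls_mem_GammaStar_one_iff {a v : V} :
    cls G a ∈ GammaStar G 1 v ↔ cls G a ≠ cls G v ∧ G.Adj a v :=
  dist_eq_one_iff_adj.trans twinGraph_adj_cls_iff

theorem cls_mem_GammaStar_two_iff (hc : G.Connected) (hle : ∀ u w, G.dist u w ≤ 2) {a v : V} :
    cls G a ∈ GammaStar G 2 v ↔ cls G a ≠ cls G v ∧ ¬ G.Adj a v := by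
  simp only [GammaStar, Set.mem_ofPred_eq, dist_eq_two_iff, twinGraph_adj_cls_iff]
  refine ⟨fun ⟨hne, hadj, _⟩ => ⟨hne, fun h => hadj ⟨hne, h⟩⟩, fun ⟨hne, hav⟩ => ?_⟩
  obtain ⟨m, ham, hmv⟩ := exists_adj_adj_of_not_adj hc hle (by rintro rfl; exact hne rfl) hav
  have ham' : cls G a ≠ cls G m := fun h => hav ((adj_iff_adj_of_cls_eq h hne.symm).2 hmv)
  have hmv' : cls G m ≠ cls G v := fun h =>
    hav ((adj_iff_adj_of_cls_eq h.symm hne).2 ham.symm).symm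
  exact ⟨hne, fun h => hav h.2, cls G m, twinGraph_adj_cls_iff.2 ⟨ham', ham⟩,
    twinGraph_adj_cls_iff.2 ⟨hmv'.symm, hmv.symm⟩⟩

theorem adj_of_adj_of_cls_mem_R2Star (hc : G.Connected) (hle : ∀ u w, G.dist u w ≤ 2)
    {v x s : V} (hX : cls G x ∈ R2Star G v) (hxs : G.Adj x s) (hs : cls G s ≠ cls G v) :
    G.Adj s v := by
  by_contra hsv
  have hS : cls G s ∈ GammaStar G 2 v := (cls_mem_GammaStar_two_iff hc hle).2 ⟨hs, hsv⟩
  have hxs' : cls G x ≠ cls G s := by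
    intro h
    have h1 : cls G x ∈ GammaStar G 1 v := hX.1
    rw [h] at h1
    exact absurd (h1.symm.trans hS) (by norm_num)
  exact hX.2 ⟨hX.1, _, hS, twinGraph_adj_cls_iff.2 ⟨hxs', hxs⟩⟩

theorem exists_adj_not_adj_of_cls_mem_R1Star (hc : G.Connected) (hle : ∀ u w, G.dist u w ≤ 2)
    {v x a : V} (hX : cls G x ∈ R2Star G v) (ha : cls G a ∈ R1Star G v) :
    G.Adj a v ∧ ∃ e, e ≠ v ∧ ¬ G.Adj e v ∧ G.Adj a e ∧ ¬ G.Adj x e := by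
  obtain ⟨ha1, E, hE, haE⟩ := ha
  obtain ⟨e, rfl⟩ := E.exists_eq_cls
  obtain ⟨hev', hev⟩ := (cls_mem_GammaStar_two_iff hc hle).1 hE
  exact ⟨(cls_mem_GammaStar_one_iff.1 ha1).2, e, by rintro rfl; exact hev' rfl, hev,
    (twinGraph_adj_cls_iff.1 haE).2, fun h => hev (adj_of_adj_of_cls_mem_R2Star hc hle hX h hev')⟩

theorem R2Star_eq_empty_of_forall_twins_adj (hc : G.Connected) (hle : ∀ u w, G.dist u w ≤ 2)
    {v : V} (hhom : Homogeneous G (Gamma G 1 v)) (h2 : (GammaStar G 2 v).Nonempty)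
    (htw : ∀ t, Twins G v t → G.Adj v t) : R2Star G v = ∅ := by
  refine Set.eq_empty_of_forall_notMem fun X hX => ?_
  obtain ⟨x, rfl⟩ := X.exists_eq_cls
  obtain ⟨hxv', hxv⟩ := cls_mem_GammaStar_one_iff.1 hX.1
  have hnbr : ∀ s, G.Adj x s → s ≠ v → G.Adj s v := fun s hxs hsv => by
    by_cases hs : cls G s = cls G v
    · rcases cls_eq_cls_iff.1 hs.symm with rfl | ht
      · exact absurd rfl hsv
      · exact (htw s ht).symm
    · exact adj_of_adj_of_cls_mem_R2Star hc hle hX hxs hs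
  rcases hhom with hclique | hindep
  · have hxv_twin : twinRel G x v := twinRel_iff.2 fun s hsx hsv =>
      ⟨fun hxs => (hnbr s hxs hsv).symm,
        fun hvs => hclique x (mem_Gamma_one_iff.2 hxv) s (mem_Gamma_one_iff.2 hvs.symm) hsx.symm⟩
    exact hxv' (cls_eq_cls_iff.2 hxv_twin)
  · obtain ⟨E, hE⟩ := h2
    obtain ⟨e, rfl⟩ := E.exists_eq_cls
    obtain ⟨hev', hev⟩ := (cls_mem_GammaStar_two_iff hc hle).1 hE
    have hxe : ¬ G.Adj x e := fun h => hev (adj_of_adj_of_cls_mem_R2Star hc hle hX h hev')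
    obtain ⟨m, hxm, hme⟩ := exists_adj_adj_of_not_adj hc hle (by rintro rfl; exact hev hxv) hxe
    have hmv : G.Adj m v := hnbr m hxm (by rintro rfl; exact hev hme.symm)
    exact hindep x (mem_Gamma_one_iff.2 hxv) m (mem_Gamma_one_iff.2 hmv) hxm

theorem metricDim_add_four_le_of_twin_not_adj [Fintype V] (hc : G.Connected)
    (hle : ∀ u w, G.dist u w ≤ 2) {v x t : V} (hhom : Homogeneous G (Gamma G 1 v))
    (hX : cls G x ∈ R2Star G v) (hR1 : (R1Star G v).ncard = 2) (ht : Twins G v t)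
    (hvt : ¬ G.Adj v t) : metricDim G + 4 ≤ Fintype.card V := by
  obtain ⟨A, B, hAB, hR1⟩ := Set.ncard_eq_two.1 hR1
  obtain ⟨a, rfl⟩ := A.exists_eq_cls
  obtain ⟨b, rfl⟩ := B.exists_eq_cls
  have hxv : G.Adj x v := (cls_mem_GammaStar_one_iff.1 hX.1).2
  obtain ⟨hav, e, hev', hev, hae, hxe⟩ :=
    exists_adj_not_adj_of_cls_mem_R1Star hc hle hX (a := a) (by simp [hR1])
  obtain ⟨hbv, f, hfv', hfv, hbf, hxf⟩ :=
    exists_adj_not_adj_of_cls_mem_R1Star hc hle hX (a := b) (by simp [hR1])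
  obtain ⟨s, hsa, hsb, hs⟩ := exists_not_adj_iff_of_not_twinRel (mt cls_eq_cls_iff.2 hAB)
  have hsx : s ≠ x := by
    rintro rfl
    exact hs (hhom.adj_iff_adj (mem_Gamma_one_iff.2 hxv) (mem_Gamma_one_iff.2 hav)
      (mem_Gamma_one_iff.2 hbv) hsa hsb)
  have htx : ∀ c, G.Adj c v → G.Adj c t := fun c hcv =>
    ((twinRel_iff.1 (Or.inr ht) c hcv.ne (by rintro rfl; exact hvt hcv.symm)).1 hcv.symm).symm
  have houtside : ∀ z, z ≠ v → ¬ G.Adj z v → ¬z = v ∧ ¬z = x ∧ ¬z = a ∧ ¬z = b :=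
    fun z hzv hz => ⟨hzv, by rintro rfl; exact hz hxv, by rintro rfl; exact hz hav,
      by rintro rfl; exact hz hbv⟩
  have ht' := houtside t ht.1.symm fun h => hvt h.symm
  apply metricDim_add_length_le hc (l := [v, x, a, b])
  simp only [List.pairwise_cons, List.mem_cons, List.not_mem_nil, or_false, forall_eq_or_imp,
    forall_eq, List.Pairwise.nil, and_true, not_or, false_imp_iff, implies_true]
  refine ⟨⟨⟨t, ht', ?_⟩, ⟨t, ht', ?_⟩, ⟨t, ht', ?_⟩⟩,
    ⟨⟨e, houtside e hev' hev, ?_⟩, ⟨f, houtside f hfv' hfv, ?_⟩⟩,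
    ⟨s, ⟨by rintro rfl; exact hs (iff_of_true hav hbv), hsx, hsa, hsb⟩, ?_⟩⟩ <;>
    refine dist_ne_dist_of_not_adj_iff fun h => ?_
  · exact hvt (h.2 (htx x hxv))
  · exact hvt (h.2 (htx a hav))
  · exact hvt (h.2 (htx b hbv))
  · exact hxe (h.2 hae)
  · exact hxf (h.2 hbf)
  · exact hs h

end

theorem R2Star_empty_of_homogeneous_R1Star_two_general
    {V : Type*} [Fintype V] (G : SimpleGraph V)
    (hdiam : diamEq G 2)
    (hbeta : metricDim G = Fintype.card V - 3)
    (v : V) (h2 : (GammaStar G 2 v).Nonempty)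
    (hhom : Homogeneous G (Gamma G 1 v))
    (hR1 : (R1Star G v).ncard = 2) :
    R2Star G v = ∅ := by
  obtain ⟨hc, hle, -⟩ := hdiam
  by_cases htw : ∀ t, Twins G v t → G.Adj v t
  · exact R2Star_eq_empty_of_forall_twins_adj hc hle hhom h2 htw
  push Not at htw
  obtain ⟨t, ht, hvt⟩ := htw
  refine Set.eq_empty_of_forall_notMem fun X hX => ?_
  obtain ⟨x, rfl⟩ := X.exists_eq_cls
  have hdim := metricDim_add_four_le_of_twin_not_adj hc hle hhom hX hR1 ht hvt
  omega

/-- If `G` is connected of order `n`, `diam(G) = 2`, `β(G) = n - 3`, `v` is a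
vertex with `Γ_2^*(v^*) ≠ ∅` and `Γ_1(v)` homogeneous, `Γ_2(v)` is homogeneous,
and `|R_1^*(v^*)| = 2`, then `R_2^*(v^*) = ∅`. -/
theorem R2Star_empty_of_homogeneous_R1Star_two
    {V : Type*} [Fintype V] (G : SimpleGraph V)
    (hdiam : diamEq G 2)
    (hbeta : metricDim G = Fintype.card V - 3)
    (v : V) (h2 : (GammaStar G 2 v).Nonempty)
    (hhom : Homogeneous G (Gamma G 1 v))
    (hhom2 : Homogeneous G (Gamma G 2 v))
    (hR1 : (R1Star G v).ncard = 2) :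
    R2Star G v = ∅ :=
  R2Star_empty_of_homogeneous_R1Star_two_general G hdiam hbeta v h2 hhom hR1

end PaperMetricDim
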